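/- Let I_h denote piecewise linear interpolation on the uniform grid x_i = i·h. Suppose: (i) s : ℝ × [0,T] → ℝ satisfies ‖s‖_{1,∞} ≤ S₁ (bounded spatial Lipschitz constant) and its interpolation error obeys |(1 − I_h)sⁿ(x)| ≤ C·h² for all x; (ii) at grid point x_i and time level n, the backtracked numerical value is w̄_iⁿ = (I_h wⁿ)(x̃_i) where x̃_i = x_i − ( (f/s)-coefficient·z + (D/s)-coefficient·∂w/∂x )·Δt/φ with |x̃_i − x_i| ≤ (Δt/φ_*)·( Φ₁·‖zⁿ⁻¹‖_∞ + Φ₂·(|∂s_iⁿ/∂x| + |∂ζ_iⁿ/∂x|) ) for constants Φ₁, Φ₂ bounding ‖f/s‖_∞ and ‖D/s‖_∞ and φ ≥ φ_* > 0; (iii) the numerical velocity satisfies ‖zⁿ⁻¹‖_∞ ≤ M₀(1 + β·h); and (iv) ζ̄_iⁿ = (I_h sⁿ)(x̃_i) − w̄_iⁿ denotes the interpolated saturation error. Then |w̄_iⁿ − s_iⁿ| ≤ M·( Δt + h·Δt + h² + |ζ̄_iⁿ| + Δt·|∂ζ_iⁿ/∂x| ), where M depends only on S₁, C, Φ₁,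 Φ₂, M₀, β, φ_*. -/

import Mathlib

/-!
Insert `sⁿ(x̃_i)` and `(I_h sⁿ)(x̃_i)` between `w̄_iⁿ` and `sⁿ(x_i)`: the three differences are
the interpolated error `ζ̄_iⁿ`, the interpolation error `O(h²)`, and the Lipschitz bound
`S₁|x̃_i − x_i|`. The displacement of the foot point is `O(Δt)(1 + h + |∂ζ_iⁿ/∂x|)` once the
velocity and `|∂s_iⁿ/∂x|` are bounded, and all five terms are then absorbed by one constant.
-/

theorem norm_sub_le_of_lipschitz_of_interp {X E : Type*} [PseudoMetricSpace X]
    [SeminormedAddCommGroup E] {s Is : X → E} {L ε : ℝ}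
    (hs : ∀ y z, dist (s y) (s z) ≤ L * dist y z) (hI : ∀ y, ‖s y - Is y‖ ≤ ε)
    (x x' : X) (w : E) :
    ‖w - s x‖ ≤ ‖Is x' - w‖ + ε + L * dist x' x := by
  calc ‖w - s x‖ = ‖-(Is x' - w) + (Is x' - s x') + (s x' - s x)‖ := by congr 1; abel
    _ ≤ ‖-(Is x' - w)‖ + ‖Is x' - s x'‖ + ‖s x' - s x‖ := norm_add₃_le
    _ ≤ ‖Is x' - w‖ + ε + L * dist x' x := by
        rw [norm_neg, norm_sub_rev (Is x') (s x')]
        exact add_le_add (add_le_add le_rfl (hI x')) ((dist_eq_norm _ _).symm.trans_le (hs x' x))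

theorem lipschitz_mul_foot_displacement_le {S₁ Φ₁ Φ₂ M₀ β φs h Δt Z sx ζx d : ℝ}
    (hS₁ : 0 ≤ S₁) (hΦ₁ : 0 ≤ Φ₁) (hΦ₂ : 0 ≤ Φ₂) (hφs : 0 < φs) (hΔt : 0 ≤ Δt)
    (hd : d ≤ Δt / φs * (Φ₁ * Z + Φ₂ * (sx + ζx))) (hZ : Z ≤ M₀ * (1 + β * h))
    (hsx : sx ≤ S₁) :
    S₁ * d ≤ S₁ / φs * (Φ₁ * M₀ + Φ₂ * S₁) * Δt + S₁ / φs * Φ₁ * M₀ * β * (h * Δt)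
      + S₁ / φs * Φ₂ * (Δt * ζx) := by
  calc S₁ * d ≤ S₁ * (Δt / φs * (Φ₁ * (M₀ * (1 + β * h)) + Φ₂ * (S₁ + ζx))) := by
        gcongr
        exact hd.trans (by gcongr)
    _ = _ := by ring

theorem add_five_mul_le_mul_sum {M a b c d e u v w x y : ℝ}
    (ha : a ≤ M) (hb : b ≤ M) (hc : c ≤ M) (hd : d ≤ M) (he : e ≤ M)
    (hu : 0 ≤ u) (hv : 0 ≤ v) (hw : 0 ≤ w) (hx : 0 ≤ x) (hy : 0 ≤ y) :
    a * u + b * v + c * w + d * x + e * y ≤ M * (u + v + w + x + y) := by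
  nlinarith [mul_le_mul_of_nonneg_right ha hu, mul_le_mul_of_nonneg_right hb hv,
    mul_le_mul_of_nonneg_right hc hw, mul_le_mul_of_nonneg_right hd hx,
    mul_le_mul_of_nonneg_right he hy]

/-- **Estimate (F-1-2-a) of the paper (equation (3.47)): deviation of the backtracked
numerical saturation from the exact saturation.**  Suppose the exact saturation `sⁿ`
is spatially Lipschitz with constant `S₁` and its piecewise linear interpolant `I_h sⁿ`
obeys `|(1 − I_h)sⁿ(x)| ≤ C·h²`; the backtracked value is `w̄_iⁿ = (I_h wⁿ)(x̃_i)`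
where the foot point satisfies
`|x̃_i − x_i| ≤ (Δt/φ_*)(Φ₁‖zⁿ⁻¹‖_∞ + Φ₂(|∂s_iⁿ/∂x| + |∂ζ_iⁿ/∂x|))`;
the numerical velocity satisfies `‖zⁿ⁻¹‖_∞ ≤ M₀(1 + βh)`; and
`ζ̄_iⁿ = (I_h sⁿ)(x̃_i) − w̄_iⁿ` is the interpolated saturation error.  Then
`|w̄_iⁿ − s_iⁿ| ≤ M(Δt + hΔt + h² + |ζ̄_iⁿ| + Δt·|∂ζ_iⁿ/∂x|)` with `M` depending only
on `S₁, C, Φ₁, Φ₂, M₀, β, φ_*`. -/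
theorem backtracked_saturation_estimate
    (S₁ C Φ₁ Φ₂ M₀ β φs : ℝ)
    (hS₁ : 0 ≤ S₁) (hC : 0 ≤ C) (hΦ₁ : 0 ≤ Φ₁) (hΦ₂ : 0 ≤ Φ₂)
    (hM₀ : 0 ≤ M₀) (hβ : 0 ≤ β) (hφs : 0 < φs) :
    ∃ M : ℝ, 0 < M ∧
      ∀ (h Δt : ℝ), 0 < h → 0 < Δt →
      -- `sn` is the exact saturation at time level `n`, `Ihs = I_h sⁿ` its interpolant
      ∀ (sn Ihs : ℝ → ℝ),
        (∀ y z : ℝ, |sn y - sn z| ≤ S₁ * |y - z|) →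
        (∀ y : ℝ, |sn y - Ihs y| ≤ C * h ^ 2) →
      -- grid point `x_i`, foot point `x̃_i`, backtracked value `w̄`, velocity bound `Z`,
      -- `sx = |∂s_iⁿ/∂x|`, `ζx = |∂ζ_iⁿ/∂x|`, interpolated error `ζ̄`
      ∀ (xi xtil wbar Z sx ζx ζbar : ℝ),
        0 ≤ sx → sx ≤ S₁ → 0 ≤ ζx → 0 ≤ Z →
        |xtil - xi| ≤ Δt / φs * (Φ₁ * Z + Φ₂ * (sx + ζx)) →
        Z ≤ M₀ * (1 + β * h) →
        ζbar = Ihs xtil - wbar →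
        |wbar - sn xi| ≤ M * (Δt + h * Δt + h ^ 2 + |ζbar| + Δt * ζx) := by
  set A := S₁ / φs * (Φ₁ * M₀ + Φ₂ * S₁)
  set B := S₁ / φs * Φ₁ * M₀ * β
  set D := S₁ / φs * Φ₂
  have hA : 0 ≤ A := by positivity
  have hB : 0 ≤ B := by positivity
  have hD : 0 ≤ D := by positivity
  refine ⟨1 + C + A + B + D, by positivity, ?_⟩
  intro h Δt hh hΔt sn Ihs hLip hInterp xi xtil wbar Z sx ζx ζbar _ hsxS hζx _ hfoot hZM hζbar
  have hsplit : |wbar - sn xi| ≤ |ζbar| + C * h ^ 2 + S₁ * |xtil - xi| := by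
    simpa only [Real.norm_eq_abs, Real.dist_eq, ← hζbar] using
      norm_sub_le_of_lipschitz_of_interp hLip hInterp xi xtil wbar
  have hdisp : S₁ * |xtil - xi| ≤ A * Δt + B * (h * Δt) + D * (Δt * ζx) :=
    lipschitz_mul_foot_displacement_le hS₁ hΦ₁ hΦ₂ hφs hΔt.le hfoot hZM hsxS
  calc |wbar - sn xi| ≤ A * Δt + B * (h * Δt) + C * h ^ 2 + 1 * |ζbar| + D * (Δt * ζx) := by
        linarith
    _ ≤ (1 + C + A + B + D) * (Δt + h * Δt + h ^ 2 + |ζbar| + Δt * ζx) :=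
        add_five_mul_le_mul_sum (by linarith) (by linarith) (by linarith) (by linarith)
          (by linarith) hΔt.le (mul_pos hh hΔt).le (sq_nonneg h) (abs_nonneg ζbar)
          (mul_nonneg hΔt.le hζx)
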